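/- Let Q: ℝ → ℝ be a continuous function satisfying Q(t) ≥ (1+δ) log(1+t²) for some δ > 0 and all |t| large enough. Then there is a constant C > 0 such that for all t ∈ ℝ and all N: ρ_{N,Q}^1(t) ≤ e^{CN} e^{−N [ Q(t) − log(1+t²) ]}. -/

import Mathlib

/-!
Write a point of `ℝ^(n+1)` as `(t, y)` with `y ∈ ℝ^n`. The unnormalized density factors as
`∏ⱼ (t - yⱼ)² e^{-N Q(t)}` times a factor that does not depend on `t`. Jensen's inequality applied
to `s ↦ Σⱼ 2 log |s - yⱼ|` on `[0, 1]`, together with `∫₀¹ log |s - y| ds ≥ ½ log (1 + y²) - 3`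
and `(t - y)² ≤ 2 (1 + t²)(1 + y²)`, gives
`∏ⱼ (t - yⱼ)² ≤ e^{7n} (1 + t²)ⁿ ∫₀¹ ∏ⱼ (s - yⱼ)² ds`.
As `Q` is bounded above on `[0, 1]`, the density at `(t, y)` is at most
`e^{CN} e^{-N (Q(t) - log (1 + t²))}` times its integral over `s ∈ [0, 1]` at `(s, y)`; integrating
in `y` bounds the numerator of `ρ¹(t)` by the same factor times the partition function.
-/

open MeasureTheory Real Filter

/-- Squared Vandermonde interaction `∏_{i<j} (x_i - x_j)²`. -/
noncomputable def pairProd (N : ℕ) (x : Fin N → ℝ) : ℝ :=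
  ∏ i : Fin N, ∏ j ∈ Finset.Ioi i, (x i - x j) ^ 2

/-- Unnormalized density of the ensemble `P_{N,Q}`. -/
noncomputable def densQ (N : ℕ) (Q : ℝ → ℝ) (x : Fin N → ℝ) : ℝ :=
  pairProd N x * Real.exp (-(N : ℝ) * ∑ j, Q (x j))

/-- Normalized density of the ensemble `P_{N,Q}`. -/
noncomputable def PQ (N : ℕ) (Q : ℝ → ℝ) (x : Fin N → ℝ) : ℝ :=
  densQ N Q x / ∫ y : Fin N → ℝ, densQ N Q y

/-- `k`-th correlation function of a density `P` on `ℝ^N`. -/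
noncomputable def corr (N k : ℕ) (P : (Fin N → ℝ) → ℝ) (t : Fin k → ℝ) : ℝ :=
  if hk : k ≤ N then
    ∫ y : Fin (N - k) → ℝ,
      P (fun i => if hi : (i : ℕ) < k then t ⟨(i : ℕ), hi⟩
          else y ⟨(i : ℕ) - k, by have := i.isLt; omega⟩)
  else 0

/-- First correlation function `ρ¹_{N,Q}`. -/
noncomputable def rho1 (N : ℕ) (Q : ℝ → ℝ) (t : ℝ) : ℝ :=
  corr N 1 (PQ N Q) (fun _ => t)

lemma exp_integral_le_integral_exp {α : Type*} [MeasurableSpace α] {μ : Measure α}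
    [IsProbabilityMeasure μ] {f : α → ℝ} (hf : Integrable f μ)
    (hexp : Integrable (fun x => exp (f x)) μ) :
    exp (∫ x, f x ∂μ) ≤ ∫ x, exp (f x) ∂μ :=
  convexOn_exp.map_integral_le continuous_exp.continuousOn isClosed_univ
    (ae_of_all _ fun _ => Set.mem_univ _) hf hexp

lemma lintegral_fin_cons {n : ℕ} {f : (Fin (n + 1) → ℝ) → ENNReal} (hf : Measurable f) :
    ∫⁻ y : Fin n → ℝ, ∫⁻ s, f (Fin.cons s y) = ∫⁻ x, f x := by
  have he := (volume_preserving_piFinSuccAbove (fun _ : Fin (n + 1) => ℝ) 0).symm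
  rw [← he.lintegral_comp hf, Measure.volume_eq_prod, lintegral_prod_symm']
  · simp [MeasurableEquiv.piFinSuccAbove_symm_apply, Fin.insertNthEquiv]
  · exact hf.comp (MeasurableEquiv.measurable _)

lemma integral_fin_cons_le_mul_integral {n : ℕ} {F : (Fin (n + 1) → ℝ) → ℝ} (hF : Continuous F)
    (hF₀ : ∀ x, 0 ≤ F x) (hFi : Integrable F) {S : Set ℝ} (hS : IsCompact S) {A t : ℝ}
    (hA : 0 ≤ A) (h : ∀ y, F (Fin.cons t y) ≤ A * ∫ s in S, F (Fin.cons s y)) :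
    ∫ y, F (Fin.cons t y) ≤ A * ∫ x, F x := by
  have hslice (y : Fin n → ℝ) : IntegrableOn (fun s => F (Fin.cons s y)) S :=
    (hF.comp (by fun_prop : Continuous fun s : ℝ => (Fin.cons s y : Fin (n + 1) → ℝ)))
      |>.continuousOn.integrableOn_compact hS
  rw [integral_eq_lintegral_of_nonneg_ae (ae_of_all _ fun y => hF₀ _)
    (hF.comp (by fun_prop : Continuous fun y => (Fin.cons t y : Fin (n + 1) → ℝ))
      |>.aestronglyMeasurable)]
  refine ENNReal.toReal_le_of_le_ofReal (mul_nonneg hA (integral_nonneg hF₀)) ?_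
  calc ∫⁻ y, ENNReal.ofReal (F (Fin.cons t y))
      ≤ ∫⁻ y, ENNReal.ofReal A * ∫⁻ s in S, ENNReal.ofReal (F (Fin.cons s y)) := by
        refine lintegral_mono fun y => ?_
        rw [← ofReal_integral_eq_lintegral_ofReal (hslice y) (ae_of_all _ fun _ => hF₀ _),
          ← ENNReal.ofReal_mul hA]
        exact ENNReal.ofReal_le_ofReal (h y)
    _ ≤ ENNReal.ofReal A * ∫⁻ y, ∫⁻ s, ENNReal.ofReal (F (Fin.cons s y)) := by
        rw [lintegral_const_mul' _ _ ENNReal.ofReal_ne_top]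
        gcongr with y
        exact Measure.restrict_le_self
    _ = ENNReal.ofReal (A * ∫ x, F x) := by
        rw [lintegral_fin_cons (f := fun x => ENNReal.ofReal (F x))
            (ENNReal.measurable_ofReal.comp hF.measurable),
          ← ofReal_integral_eq_lintegral_ofReal hFi (ae_of_all _ hF₀), ENNReal.ofReal_mul hA]

lemma integral_log_sub (y : ℝ) :
    ∫ s in (0 : ℝ)..1, log (s - y) = (1 - y) * log (1 - y) + y * log y - 1 := by
  rw [intervalIntegral.integral_comp_sub_right (fun s => log s), integral_log]
  simp only [zero_sub, log_neg_eq_log]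
  ring

lemma log_le_mul_log_sub_mul_log {z : ℝ} (hz : 1 ≤ z) :
    log z ≤ z * log z - (z - 1) * log (z - 1) := by
  have hmono : log (z - 1) ≤ log z := by
    rcases (sub_nonneg.2 hz).eq_or_lt with h | h
    · rw [← h, log_zero]
      exact log_nonneg hz
    · exact log_le_log h (by linarith)
  nlinarith

lemma log_one_add_sq_le_integral_log_sub (y : ℝ) :
    log (1 + y ^ 2) / 2 - 3 ≤ ∫ s in (0 : ℝ)..1, log (s - y) := by
  rw [integral_log_sub]
  rcases le_total y 0 with hy | hy
  · have h := log_le_mul_log_sub_mul_log (z := 1 - y) (by linarith)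
    rw [show 1 - y - 1 = -y by ring, log_neg_eq_log] at h
    have : log (1 + y ^ 2) ≤ 2 * log (1 - y) :=
      calc log (1 + y ^ 2) ≤ log ((1 - y) ^ 2) := log_le_log (by positivity) (by nlinarith)
        _ = 2 * log (1 - y) := by simp [log_pow]
    nlinarith
  rcases le_total y 1 with hy1 | hy1
  · have h₁ := self_sub_one_le_mul_log (x := 1 - y) (by linarith)
    have h₂ := self_sub_one_le_mul_log hy
    have : log (1 + y ^ 2) ≤ y ^ 2 := by
      have := log_le_sub_one_of_pos (x := 1 + y ^ 2) (by positivity)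
      linarith
    nlinarith
  · have h := log_le_mul_log_sub_mul_log hy1
    rw [show 1 - y = -(y - 1) by ring, log_neg_eq_log]
    have : log (1 + y ^ 2) ≤ log 2 + 2 * log y :=
      calc log (1 + y ^ 2) ≤ log (2 * y ^ 2) := log_le_log (by positivity) (by nlinarith)
        _ = log 2 + 2 * log y := by simp [log_mul, log_pow, show y ≠ 0 by positivity]
    have := log_two_lt_d9
    nlinarith

lemma prod_one_add_sq_le_exp_mul_integral (n : ℕ) (y : Fin n → ℝ) :
    ∏ j, (1 + y j ^ 2) ≤ exp (6 * n) * ∫ s in Set.Icc (0 : ℝ) 1, ∏ j, (s - y j) ^ 2 := by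
  set μ := volume.restrict (Set.Icc (0 : ℝ) 1)
  have : IsProbabilityMeasure μ := ⟨by simp [μ]⟩
  have hlog (j : Fin n) : Integrable (fun s => log (s - y j)) μ := by
    have h := (intervalIntegral.intervalIntegrable_log' (a := -y j) (b := 1 - y j)).comp_sub_right
      (y j)
    rw [neg_add_cancel, sub_add_cancel] at h
    exact (intervalIntegrable_iff_integrableOn_Icc_of_le zero_le_one).1 h
  have hlog_ge (j : Fin n) : log (1 + y j ^ 2) - 6 ≤ 2 * ∫ s, log (s - y j) ∂μ := by
    have := log_one_add_sq_le_integral_log_sub (y j)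
    rw [intervalIntegral.integral_of_le zero_le_one, ← integral_Icc_eq_integral_Ioc] at this
    linarith
  set f : ℝ → ℝ := fun s => ∑ j, 2 * log (s - y j)
  have hf : Integrable f μ := integrable_finsetSum _ fun j _ => (hlog j).const_mul 2
  -- `exp (2 log x) = x ^ 2` fails only at `x = 0`, since `log 0 = 0`
  have hexp_f : (fun s => exp (f s)) =ᵐ[μ] fun s => ∏ j, (s - y j) ^ 2 := by
    have : ∀ᵐ s ∂μ, ∀ j, s ≠ y j :=
      ae_restrict_of_ae (ae_all_iff.2 fun j => by simp [ae_iff, measure_singleton])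
    filter_upwards [this] with s hs
    simp only [f, exp_sum]
    refine Finset.prod_congr rfl fun j _ => ?_
    rw [← Nat.cast_ofNat, exp_nat_mul, exp_log_eq_abs (sub_ne_zero.2 (hs j)), sq_abs]
  have hG : Integrable (fun s => ∏ j, (s - y j) ^ 2) μ :=
    Continuous.integrableOn_Icc (by fun_prop)
  calc ∏ j, (1 + y j ^ 2) = exp (∑ j, log (1 + y j ^ 2)) := by
        rw [exp_sum]
        exact Finset.prod_congr rfl fun j _ => (exp_log (by positivity)).symm
    _ ≤ exp (6 * n + ∫ s, f s ∂μ) := by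
        gcongr
        rw [integral_finsetSum _ fun j _ => (hlog j).const_mul 2]
        simp only [integral_const_mul]
        have := Finset.sum_le_sum fun j (_ : j ∈ Finset.univ) => hlog_ge j
        simp only [Finset.sum_sub_distrib, Finset.sum_const, Finset.card_univ, Fintype.card_fin,
          nsmul_eq_mul] at this
        linarith
    _ ≤ exp (6 * n) * ∫ s, exp (f s) ∂μ := by
        rw [exp_add]
        gcongr
        exact exp_integral_le_integral_exp hf (hG.congr hexp_f.symm)
    _ = exp (6 * n) * ∫ s in Set.Icc (0 : ℝ) 1, ∏ j, (s - y j) ^ 2 := by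
        rw [integral_congr_ae hexp_f]

lemma sq_sub_le_two_mul_one_add_sq_mul (t y : ℝ) :
    (t - y) ^ 2 ≤ 2 * (1 + t ^ 2) * (1 + y ^ 2) := by
  nlinarith [sq_nonneg (t + y), sq_nonneg (t * y)]

lemma prod_sq_sub_le_exp_mul_integral (n : ℕ) (t : ℝ) (y : Fin n → ℝ) :
    ∏ j, (t - y j) ^ 2 ≤
      exp (7 * n) * (1 + t ^ 2) ^ n * ∫ s in Set.Icc (0 : ℝ) 1, ∏ j, (s - y j) ^ 2 := by
  have two_pow_le : (2 : ℝ) ^ n ≤ exp n := by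
    rw [← mul_one (n : ℝ), exp_nat_mul]
    gcongr
    linarith [add_one_le_exp 1]
  calc ∏ j, (t - y j) ^ 2 ≤ ∏ j, (2 * (1 + t ^ 2) * (1 + y j ^ 2)) :=
        Finset.prod_le_prod (fun _ _ => sq_nonneg _)
          fun j _ => sq_sub_le_two_mul_one_add_sq_mul t (y j)
    _ = 2 ^ n * (1 + t ^ 2) ^ n * ∏ j, (1 + y j ^ 2) := by
        simp [Finset.prod_mul_distrib, mul_pow]
    _ ≤ exp n * (1 + t ^ 2) ^ n *
          (exp (6 * n) * ∫ s in Set.Icc (0 : ℝ) 1, ∏ j, (s - y j) ^ 2) := by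
        gcongr
        exact prod_one_add_sq_le_exp_mul_integral n y
    _ = exp (7 * n) * (1 + t ^ 2) ^ n * ∫ s in Set.Icc (0 : ℝ) 1, ∏ j, (s - y j) ^ 2 := by
        rw [show (7 : ℝ) * n = n + 6 * n by ring, exp_add]
        ring

lemma pairProd_nonneg (N : ℕ) (x : Fin N → ℝ) : 0 ≤ pairProd N x :=
  Finset.prod_nonneg fun _ _ => Finset.prod_nonneg fun _ _ => sq_nonneg _

lemma densQ_nonneg (N : ℕ) (Q : ℝ → ℝ) (x : Fin N → ℝ) : 0 ≤ densQ N Q x :=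
  mul_nonneg (pairProd_nonneg N x) (exp_nonneg _)

lemma continuous_densQ {Q : ℝ → ℝ} (hQ : Continuous Q) (N : ℕ) : Continuous (densQ N Q) := by
  unfold densQ pairProd
  fun_prop

lemma pairProd_cons (n : ℕ) (t : ℝ) (y : Fin n → ℝ) :
    pairProd (n + 1) (Fin.cons t y) = (∏ j, (t - y j) ^ 2) * pairProd n y := by
  unfold pairProd
  rw [Fin.prod_univ_succ, Fin.prod_Ioi_zero]
  simp [Fin.prod_Ioi_succ]

lemma densQ_cons (n : ℕ) (Q : ℝ → ℝ) (t : ℝ) (y : Fin n → ℝ) :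
    densQ (n + 1) Q (Fin.cons t y) =
      (∏ j, (t - y j) ^ 2) * exp (-((n + 1 : ℕ) : ℝ) * Q t) *
        (pairProd n y * exp (-((n + 1 : ℕ) : ℝ) * ∑ j, Q (y j))) := by
  rw [densQ, pairProd_cons, Fin.sum_univ_succ]
  simp only [Fin.cons_zero, Fin.cons_succ, mul_add, exp_add]
  ring

lemma rho1_succ (n : ℕ) (Q : ℝ → ℝ) (t : ℝ) :
    rho1 (n + 1) Q t =
      (∫ y : Fin n → ℝ, densQ (n + 1) Q (Fin.cons t y)) / ∫ x, densQ (n + 1) Q x := by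
  rw [rho1, corr, dif_pos (by omega)]
  simp only [PQ]
  rw [integral_div]
  congr 1
  refine integral_congr_ae (ae_of_all _ fun y => congrArg _ (funext fun i => ?_))
  refine Fin.cases ?_ (fun j => ?_) i <;> simp

lemma densQ_cons_le_mul_integral {Q : ℝ → ℝ} (hQ : Continuous Q) {B : ℝ}
    (hB : ∀ s ∈ Set.Icc (0 : ℝ) 1, Q s ≤ B) (n : ℕ) (t : ℝ) (y : Fin n → ℝ) :
    densQ (n + 1) Q (Fin.cons t y) ≤
      exp ((7 + B) * (n + 1 : ℕ)) * exp (-((n + 1 : ℕ) : ℝ) * (Q t - log (1 + t ^ 2))) *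
        ∫ s in Set.Icc (0 : ℝ) 1, densQ (n + 1) Q (Fin.cons s y) := by
  set N : ℝ := ((n + 1 : ℕ) : ℝ) with hN
  set G : ℝ → ℝ := fun s => ∏ j, (s - y j) ^ 2
  set W := pairProd n y * exp (-N * ∑ j, Q (y j))
  have hG : ∀ s, 0 ≤ G s := fun s => Finset.prod_nonneg fun _ _ => sq_nonneg _
  have hW : 0 ≤ W := mul_nonneg (pairProd_nonneg n y) (exp_nonneg _)
  have hD (s : ℝ) : densQ (n + 1) Q (Fin.cons s y) = G s * exp (-N * Q s) * W :=
    densQ_cons n Q s y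
  have hweight : ∫ s in Set.Icc (0 : ℝ) 1, G s ≤
      exp (N * B) * ∫ s in Set.Icc (0 : ℝ) 1, G s * exp (-N * Q s) := by
    rw [← integral_const_mul]
    refine setIntegral_mono_on (Continuous.integrableOn_Icc (by fun_prop))
      (Continuous.integrableOn_Icc (by fun_prop)) measurableSet_Icc fun s hs => ?_
    have : 1 ≤ exp (N * B) * exp (-N * Q s) := by
      rw [← exp_add, one_le_exp_iff]
      nlinarith [hB s hs, show (0 : ℝ) ≤ N by positivity]
    nlinarith [hG s]
  have hpow : (1 + t ^ 2) ^ n ≤ exp (N * log (1 + t ^ 2)) := by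
    rw [hN, exp_nat_mul, exp_log (by positivity)]
    exact pow_le_pow_right₀ (by nlinarith) n.le_succ
  calc densQ (n + 1) Q (Fin.cons t y) = G t * exp (-N * Q t) * W := hD t
    _ ≤ (exp (7 * n) * (1 + t ^ 2) ^ n * ∫ s in Set.Icc (0 : ℝ) 1, G s) * exp (-N * Q t) * W := by
        gcongr
        exact prod_sq_sub_le_exp_mul_integral n t y
    _ ≤ (exp (7 * n) * exp (N * log (1 + t ^ 2)) *
          (exp (N * B) * ∫ s in Set.Icc (0 : ℝ) 1, G s * exp (-N * Q s))) *
          exp (-N * Q t) * W := by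
        gcongr
    _ = exp (7 * n + N * B) * exp (-N * (Q t - log (1 + t ^ 2))) *
          ((∫ s in Set.Icc (0 : ℝ) 1, G s * exp (-N * Q s)) * W) := by
        rw [exp_add, show -N * (Q t - log (1 + t ^ 2)) = N * log (1 + t ^ 2) + -N * Q t by ring,
          exp_add]
        ring
    _ ≤ exp ((7 + B) * N) * exp (-N * (Q t - log (1 + t ^ 2))) *
          ∫ s in Set.Icc (0 : ℝ) 1, densQ (n + 1) Q (Fin.cons s y) := by
        simp only [hD, integral_mul_const]
        gcongr
        push_cast [hN]
        linarith

theorem statement_14_general (Q : ℝ → ℝ)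
    (hQcont : Continuous Q) :
    ∃ C : ℝ, 0 < C ∧ ∀ N : ℕ, 1 ≤ N → ∀ t : ℝ,
      rho1 N Q t ≤ Real.exp (C * N) *
        Real.exp (-(N : ℝ) * (Q t - Real.log (1 + t ^ 2))) := by
  obtain ⟨B, hB⟩ := (isCompact_Icc (a := (0 : ℝ)) (b := 1)).bddAbove_image hQcont.continuousOn
  refine ⟨7 + |B|, by positivity, fun N hN t => ?_⟩
  obtain ⟨n, rfl⟩ := Nat.exists_eq_add_of_le' hN
  rw [rho1_succ]
  have hZ₀ : 0 ≤ ∫ x, densQ (n + 1) Q x := integral_nonneg (densQ_nonneg (n + 1) Q)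
  rcases hZ₀.eq_or_lt with hZ | hZ
  · rw [← hZ, div_zero]
    positivity
  rw [div_le_iff₀ hZ]
  exact integral_fin_cons_le_mul_integral (continuous_densQ hQcont _) (densQ_nonneg _ _)
    (Integrable.of_integral_ne_zero hZ.ne') isCompact_Icc (by positivity)
    (densQ_cons_le_mul_integral hQcont (fun s hs => (hB ⟨s, hs, rfl⟩).trans (le_abs_self B)) n t)

/-- If `Q` is continuous and `Q(t) ≥ (1+δ) log(1+t²)` for large `|t|`,
then `ρ¹_{N,Q}(t) ≤ e^{CN} e^{−N[Q(t) − log(1+t²)]}` for all `t` and `N`. -/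
theorem statement_14 (Q : ℝ → ℝ)
    (hQcont : Continuous Q)
    (hgrowth : ∃ δ : ℝ, 0 < δ ∧ ∃ T : ℝ, ∀ t : ℝ, T ≤ |t| →
      (1 + δ) * Real.log (1 + t ^ 2) ≤ Q t) :
    ∃ C : ℝ, 0 < C ∧ ∀ N : ℕ, 1 ≤ N → ∀ t : ℝ,
      rho1 N Q t ≤ Real.exp (C * N) *
        Real.exp (-(N : ℝ) * (Q t - Real.log (1 + t ^ 2))) :=
  statement_14_general Q hQcont
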